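/- Let (A,·,α) be a Hom-pre-Lie algebra and (V,β,ρ,μ) a representation, and let T : V → A be a linear map. Then T is an O-operator on (A,·,α) with respect to (V,β,ρ,μ) if and only if the linear map T̄ : A ⊕ V → A ⊕ V defined by T̄(x+u) = T(u) is a Nijenhuis operator on the semidirect product Hom-pre-Lie algebra A ⋉_{(ρ,μ)} V. -/
import Mathlib


/-- A Hom-pre-Lie algebra structure on `A`: a bilinear product and an algebra
morphism `α` satisfying the Hom-pre-Lie identity. -/
def IsHomPreLie {K A : Type*} [Field K] [AddCommGroup A] [Module K A]
    (mul : A →ₗ[K] A →ₗ[K] A) (α : A →ₗ[K] A) : Prop :=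
  (∀ x y, α (mul x y) = mul (α x) (α y)) ∧
  (∀ x y z, mul (mul x y) (α z) - mul (α x) (mul y z)
      = mul (mul y x) (α z) - mul (α y) (mul x z))

/-- A representation of a Hom-Lie algebra `(L, bracket, α)` on `V` with respect to `β`. -/
def IsHomLieRep {K L V : Type*} [Field K] [AddCommGroup L] [Module K L]
    [AddCommGroup V] [Module K V]
    (bracket : L →ₗ[K] L →ₗ[K] L) (α : L →ₗ[K] L)
    (β : V →ₗ[K] V) (ρ : L →ₗ[K] Module.End K V) : Prop :=
  (∀ x, ρ (α x) ∘ₗ β = β ∘ₗ ρ x) ∧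
  (∀ x y, ρ (bracket x y) ∘ₗ β = ρ (α x) ∘ₗ ρ y - ρ (α y) ∘ₗ ρ x)

/-- A representation `(V, β, ρ, μ)` of a Hom-pre-Lie algebra `(A, mul, α)`:
`ρ` is a representation of the sub-adjacent Hom-Lie algebra (whose bracket is the
commutator `mul - mul.flip`) with respect to `β`, together with the two compatibility
conditions for `μ`. -/
def IsHomPreLieRep {K A V : Type*} [Field K] [AddCommGroup A] [Module K A]
    [AddCommGroup V] [Module K V]
    (mul : A →ₗ[K] A →ₗ[K] A) (α : A →ₗ[K] A)
    (β : V →ₗ[K] V) (ρ μ : A →ₗ[K] Module.End K V) : Prop :=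
  IsHomLieRep (mul - mul.flip) α β ρ ∧
  (∀ x, β ∘ₗ μ x = μ (α x) ∘ₗ β) ∧
  (∀ x y, μ (α y) ∘ₗ μ x - μ (mul x y) ∘ₗ β = μ (α y) ∘ₗ ρ x - ρ (α x) ∘ₗ μ y)

/-- The semidirect product multiplication `(x+u) ⋉ (y+v) = x·y + ρ(x)v + μ(y)u`
on `A × V`. -/
def sdMul {K A V : Type*} [Field K] [AddCommGroup A] [Module K A]
    [AddCommGroup V] [Module K V]
    (mul : A →ₗ[K] A →ₗ[K] A) (ρ μ : A →ₗ[K] Module.End K V) :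
    (A × V) →ₗ[K] (A × V) →ₗ[K] (A × V) :=
  LinearMap.mk₂ K (fun p q => (mul p.1 q.1, ρ p.1 q.2 + μ q.1 p.2))
    (fun p p' q => by
      simp only [Prod.fst_add, Prod.snd_add, map_add, LinearMap.add_apply,
        Prod.mk_add_mk, Prod.mk.injEq]
      exact ⟨trivial, by abel⟩)
    (fun c p q => by
      simp only [Prod.smul_fst, Prod.smul_snd, map_smul, LinearMap.smul_apply,
        Prod.smul_mk, Prod.mk.injEq, smul_add])
    (fun p q q' => by
      simp only [Prod.fst_add, Prod.snd_add, map_add, LinearMap.add_apply,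
        Prod.mk_add_mk, Prod.mk.injEq]
      exact ⟨trivial, by abel⟩)
    (fun c p q => by
      simp only [Prod.smul_fst, Prod.smul_snd, map_smul, LinearMap.smul_apply,
        Prod.smul_mk, Prod.mk.injEq, smul_add])

/-- A Nijenhuis operator `N` on a Hom-pre-Lie algebra `(B, mul, γ)`:
`N ∘ γ = γ ∘ N` and `N(a)∗N(b) = N(N(a)∗b + a∗N(b) − N(a∗b))`. -/
def IsNijenhuis {K B : Type*} [Field K] [AddCommGroup B] [Module K B]
    (mul : B →ₗ[K] B →ₗ[K] B) (γ : B →ₗ[K] B) (N : B →ₗ[K] B) : Prop :=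
  (∀ a, N (γ a) = γ (N a)) ∧
  (∀ a b, mul (N a) (N b) = N (mul (N a) b + mul a (N b) - N (mul a b)))

/-- An `O`-operator `T : V → A` on a Hom-pre-Lie algebra `(A, mul, α)` with
respect to a representation `(V, β, ρ, μ)`:
`T ∘ β = α ∘ T` and `T(u)·T(v) = T(ρ(T(u))(v) + μ(T(v))(u))`. -/
def IsOOperator {K A V : Type*} [Field K] [AddCommGroup A] [Module K A]
    [AddCommGroup V] [Module K V]
    (mul : A →ₗ[K] A →ₗ[K] A) (α : A →ₗ[K] A) (β : V →ₗ[K] V)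
    (ρ μ : A →ₗ[K] Module.End K V) (T : V →ₗ[K] A) : Prop :=
  (∀ v, T (β v) = α (T v)) ∧
  (∀ u v, mul (T u) (T v) = T (ρ (T u) v + μ (T v) u))

/-- Let `(A,·,α)` be a Hom-pre-Lie algebra, `(V,β,ρ,μ)` a
representation, and `T : V → A` a linear map.  Then `T` is an `O`-operator if and
only if `T̄ : A ⊕ V → A ⊕ V`, `T̄(x+u) = T(u)`, is a Nijenhuis operator on the
semidirect product Hom-pre-Lie algebra `A ⋉_{(ρ,μ)} V`. -/
theorem oOperator_iff_nijenhuis_on_semidirect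
    {K A V : Type*} [Field K] [AddCommGroup A] [Module K A]
    [AddCommGroup V] [Module K V]
    (mul : A →ₗ[K] A →ₗ[K] A) (α : A ≃ₗ[K] A)
    (hA : IsHomPreLie mul (α : A →ₗ[K] A))
    (β : V →ₗ[K] V) (ρ μ : A →ₗ[K] Module.End K V)
    (hrep : IsHomPreLieRep mul (α : A →ₗ[K] A) β ρ μ)
    (T : V →ₗ[K] A) :
    IsOOperator mul (α : A →ₗ[K] A) β ρ μ T ↔
      IsNijenhuis (sdMul mul ρ μ) ((α : A →ₗ[K] A).prodMap β)
        (LinearMap.prod (T ∘ₗ LinearMap.snd K A V) (0 : A × V →ₗ[K] V)) := by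
  constructor
  · rintro ⟨h1, h2⟩
    constructor
    · rintro ⟨x, u⟩
      simp [sdMul, h1 u]
    · rintro ⟨x, u⟩ ⟨y, v⟩
      simp [sdMul, LinearMap.mk₂_apply, Prod.ext_iff, h2 u v]
  · rintro ⟨h1, h2⟩
    constructor
    · intro v
      have := h1 (0, v)
      simpa [sdMul, Prod.ext_iff] using this
    · intro u v
      have := h2 (0, u) (0, v)
      simpa [sdMul, Prod.ext_iff] using this
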